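/- arXiv:1612.00362 — 6 statements merged into one kernel-verified Lean document; each statement's English description precedes it below -/
import Mathlib

section
/- Let G be a set and let h be a bounded, locally continuous pre-metric on G. Then the triangle deficiency TD_h of h is a TD function. -/
/-- A pre-metric on a set `G`: nonnegative, reflexive (vanishes exactly on the
diagonal) and symmetric. -/
def IsPreMetric {G : Type*} (h : G → G → ℝ) : Prop :=
  (∀ x y, 0 ≤ h x y) ∧ (∀ x y, h x y = 0 ↔ x = y) ∧ (∀ x y, h x y = h y x)

/-- A pre-metric is locally continuous if for every `ε > 0` there is `δ > 0` such
that `h x y < δ` implies `|h x z - h z y| < ε` for all `x y z`. -/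
def IsLocallyContinuous {G : Type*} (h : G → G → ℝ) : Prop :=
  ∀ ε > 0, ∃ δ > 0, ∀ x y z : G, h x y < δ → |h x z - h z y| < ε

/-- A pre-metric is bounded if it is bounded above by a constant. -/
def IsBoundedPreMetric {G : Type*} (h : G → G → ℝ) : Prop :=
  ∃ C : ℝ, ∀ x y, h x y ≤ C

/-- The triangle deficiency `TD_h(a,b) = sup {h x z : h x y ≤ a, h y z ≤ b}`
(in `ℝ`, `sSup ∅ = 0`). -/
noncomputable def triangleDeficiency {G : Type*} (h : G → G → ℝ) (a b : ℝ) : ℝ :=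
  sSup {r : ℝ | ∃ x y z : G, h x y ≤ a ∧ h y z ≤ b ∧ r = h x z}

/-- A TD function: a symmetric increasing nonnegative function
`g : [0,∞) × [0,∞) → [0,∞)` with `g 0 y ≤ y` such that whenever `y < t` there is
`δ > 0` with `g δ (y + δ) < t`. -/
def IsTDFunction (g : ℝ → ℝ → ℝ) : Prop :=
  (∀ a b, 0 ≤ a → 0 ≤ b → 0 ≤ g a b) ∧
  (∀ a b, 0 ≤ a → 0 ≤ b → g a b = g b a) ∧
  (∀ a a' b b', 0 ≤ a → 0 ≤ b → a ≤ a' → b ≤ b' → g a b ≤ g a' b') ∧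
  (∀ y, 0 ≤ y → g 0 y ≤ y) ∧
  (∀ y t, 0 ≤ y → y < t → ∃ δ > 0, g δ (y + δ) < t)

/-- A correction function for `g : [0,∞) × [0,∞) → [0,∞)`: a continuous increasing
function `f : [0,∞) → [0,∞)` with `f 0 = 0` and `f (g a b) ≤ f a + f b`. -/
def IsCorrectionFunction (f : ℝ → ℝ) (g : ℝ → ℝ → ℝ) : Prop :=
  ContinuousOn f (Set.Ici 0) ∧ MonotoneOn f (Set.Ici 0) ∧ f 0 = 0 ∧
  (∀ a, 0 ≤ a → 0 ≤ f a) ∧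
  (∀ a b, 0 ≤ a → 0 ≤ b → f (g a b) ≤ f a + f b)

/-- A metric on a set `G`: a pre-metric satisfying the triangle inequality. -/
def IsMetricFn {G : Type*} (d : G → G → ℝ) : Prop :=
  IsPreMetric d ∧ ∀ x y z : G, d x z ≤ d x y + d y z

/-- Two pre-metrics are uniformly equivalent if each is uniformly small when the
other is. -/
def UnifEquiv {G : Type*} (h d : G → G → ℝ) : Prop :=
  (∀ ε > 0, ∃ δ > 0, ∀ x y : G, h x y < δ → d x y < ε) ∧
  (∀ ε > 0, ∃ δ > 0, ∀ x y : G, d x y < δ → h x y < ε)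

/-- The triangle deficiency of a bounded, locally continuous pre-metric is a
TD function. -/
theorem triangleDeficiency_isTDFunction_of_locallyContinuous
    {G : Type*} (h : G → G → ℝ)
    (hpm : IsPreMetric h) (hbd : IsBoundedPreMetric h)
    (hlc : IsLocallyContinuous h) :
    IsTDFunction (triangleDeficiency h) := by
  obtain ⟨hnn, hrefl, hsym⟩ := hpm
  obtain ⟨C, hC⟩ := hbd
  have bdd : ∀ a b : ℝ, BddAbove {r : ℝ | ∃ x y z : G, h x y ≤ a ∧ h y z ≤ b ∧ r = h x z} := by
    intro a b
    refine ⟨C, ?_⟩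
    rintro r ⟨x, y, z, _, _, rfl⟩
    exact hC x z
  have nonneg : ∀ a b : ℝ, 0 ≤ triangleDeficiency h a b := by
    intro a b
    apply Real.sSup_nonneg
    rintro r ⟨x, y, z, _, _, rfl⟩
    exact hnn x z
  refine ⟨fun a b _ _ => nonneg a b, ?_, ?_, ?_, ?_⟩
  · intro a b _ _
    unfold triangleDeficiency
    congr 1
    ext r
    constructor
    · rintro ⟨x, y, z, h1, h2, rfl⟩
      exact ⟨z, y, x, by rwa [hsym], by rwa [hsym], hsym x z⟩
    · rintro ⟨x, y, z, h1, h2, rfl⟩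
      exact ⟨z, y, x, by rwa [hsym], by rwa [hsym], hsym x z⟩
  · intro a a' b b' _ _ haa hbb
    rcases Set.eq_empty_or_nonempty {r : ℝ | ∃ x y z : G, h x y ≤ a ∧ h y z ≤ b ∧ r = h x z} with he | hne
    · unfold triangleDeficiency
      rw [he, Real.sSup_empty]
      exact nonneg a' b'
    · apply csSup_le_csSup (bdd a' b') hne
      rintro r ⟨x, y, z, h1, h2, rfl⟩
      exact ⟨x, y, z, h1.trans haa, h2.trans hbb, rfl⟩
  · intro y hy
    apply Real.sSup_le _ hy
    rintro r ⟨x, w, z, h1, h2, rfl⟩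
    have hx : x = w := (hrefl x w).1 (le_antisymm h1 (hnn x w))
    rw [hx]
    exact h2
  · intro y t hy hyt
    set ε := (t - y) / 2 with hε
    have hεpos : 0 < ε := by linarith
    obtain ⟨δ₀, hδ₀pos, hδ₀⟩ := hlc ε hεpos
    refine ⟨min (δ₀ / 2) (ε / 2), by positivity, ?_⟩
    have hbound : triangleDeficiency h (min (δ₀ / 2) (ε / 2)) (y + min (δ₀ / 2) (ε / 2))
        ≤ y + ε / 2 + ε := by
      apply Real.sSup_le _ (by positivity)
      rintro r ⟨x, w, z, h1, h2, rfl⟩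
      have h1' : h x w < δ₀ := lt_of_le_of_lt h1 (lt_of_le_of_lt (min_le_left _ _) (by linarith))
      have := hδ₀ x w z h1'
      have habs : h x z - h z w < ε := lt_of_le_of_lt (le_abs_self _) this
      have hzw : h z w = h w z := hsym z w
      have h2' : h w z ≤ y + ε / 2 := h2.trans (by linarith [min_le_right (δ₀ / 2) (ε / 2)])
      linarith
    linarith
end

section
/- Let g : [0,∞) × [0,∞) → [0,∞) be a TD function, and define g̃(x,y) = inf{g(x',y') : x < x', y < y'}. Then g(x,y) ≤ g̃(x,y) for all x, y ≥ 0, g̃ is a TD function satisfying the stronger condition that whenever g̃(x,y) < t there exists δ > 0 with g̃(x+δ, y+δ) < t, and every correction function for g̃ is also a correction function for g. -/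
/-- For a TD function `g`, the function `g̃ (x,y) = inf {g x' y' : x < x', y < y'}`
dominates `g`, is itself a TD function satisfying the stronger condition that
`g̃ x y < t` yields `δ > 0` with `g̃ (x+δ) (y+δ) < t`, and every correction
function for `g̃` is a correction function for `g`. -/
theorem tdFunction_strong_modification
    (g : ℝ → ℝ → ℝ) (hg : IsTDFunction g)
    (gt : ℝ → ℝ → ℝ)
    (hgt : gt = fun x y => sInf {r : ℝ | ∃ x' y', x < x' ∧ y < y' ∧ r = g x' y'}) :
    (∀ x y, 0 ≤ x → 0 ≤ y → g x y ≤ gt x y) ∧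
    IsTDFunction gt ∧
    (∀ x y t, 0 ≤ x → 0 ≤ y → gt x y < t → ∃ δ > 0, gt (x + δ) (y + δ) < t) ∧
    (∀ f : ℝ → ℝ, IsCorrectionFunction f gt → IsCorrectionFunction f g) := by

  obtain ⟨hg0, hgs, hgm, hg0y, hg5⟩ := hg
  set S : ℝ → ℝ → Set ℝ :=
    fun x y => {r : ℝ | ∃ x' y', x < x' ∧ y < y' ∧ r = g x' y'} with hS
  have hne : ∀ x y : ℝ, (S x y).Nonempty := fun x y =>
    ⟨g (x + 1) (y + 1), x + 1, y + 1, by linarith, by linarith, rfl⟩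
  have hlb : ∀ x y : ℝ, 0 ≤ x → 0 ≤ y → ∀ r ∈ S x y, 0 ≤ r := by
    rintro x y hx hy r ⟨x', y', hx', hy', rfl⟩
    exact hg0 x' y' (le_of_lt (lt_of_le_of_lt hx hx')) (le_of_lt (lt_of_le_of_lt hy hy'))
  have hbdd : ∀ x y : ℝ, 0 ≤ x → 0 ≤ y → BddBelow (S x y) :=
    fun x y hx hy => ⟨0, fun r hr => hlb x y hx hy r hr⟩
  have hgtdef : ∀ x y : ℝ, gt x y = sInf (S x y) := by
    intro x y; rw [hgt]
  have hub : ∀ x y x' y' : ℝ, 0 ≤ x → 0 ≤ y → x < x' → y < y' →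
      gt x y ≤ g x' y' := by
    intro x y x' y' hx hy hx' hy'
    rw [hgtdef]
    exact csInf_le (hbdd x y hx hy) ⟨x', y', hx', hy', rfl⟩
  have hdom : ∀ x y : ℝ, 0 ≤ x → 0 ≤ y → g x y ≤ gt x y := by
    intro x y hx hy
    rw [hgtdef]
    apply le_csInf (hne x y)
    rintro r ⟨x', y', hx', hy', rfl⟩
    exact hgm x x' y y' hx hy hx'.le hy'.le
  have hnn : ∀ x y : ℝ, 0 ≤ x → 0 ≤ y → 0 ≤ gt x y := by
    intro x y hx hy
    rw [hgtdef]
    exact le_csInf (hne x y) (hlb x y hx hy)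
  have hsym : ∀ x y : ℝ, 0 ≤ x → 0 ≤ y → gt x y = gt y x := by
    intro x y hx hy
    rw [hgtdef, hgtdef]
    congr 1
    ext r
    constructor
    · rintro ⟨x', y', hx', hy', rfl⟩
      exact ⟨y', x', hy', hx',
        (hgs x' y' (le_of_lt (lt_of_le_of_lt hx hx')) (le_of_lt (lt_of_le_of_lt hy hy')))⟩
    · rintro ⟨x', y', hx', hy', rfl⟩
      exact ⟨y', x', hy', hx',
        (hgs x' y' (le_of_lt (lt_of_le_of_lt hy hx')) (le_of_lt (lt_of_le_of_lt hx hy')))⟩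
  have hmono : ∀ a a' b b' : ℝ, 0 ≤ a → 0 ≤ b → a ≤ a' → b ≤ b' →
      gt a b ≤ gt a' b' := by
    intro a a' b b' ha hb ha' hb'
    rw [hgtdef, hgtdef]
    apply csInf_le_csInf (hbdd a b ha hb) (hne a' b')
    rintro r ⟨x', y', hx', hy', rfl⟩
    exact ⟨x', y', lt_of_le_of_lt ha' hx', lt_of_le_of_lt hb' hy', rfl⟩
  have hlt : ∀ y t : ℝ, 0 ≤ y → y < t → gt 0 y < t := by
    intro y t hy hyt
    obtain ⟨δ, hδ, hlt⟩ := hg5 y t hy hyt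
    exact lt_of_le_of_lt (hub 0 y δ (y + δ) le_rfl hy hδ (by linarith)) hlt
  have h0y : ∀ y : ℝ, 0 ≤ y → gt 0 y ≤ y := by
    intro y hy
    by_contra h
    exact absurd (hlt y (gt 0 y) hy (lt_of_not_ge h)) (lt_irrefl _)
  have hstrong : ∀ x y t : ℝ, 0 ≤ x → 0 ≤ y → gt x y < t →
      ∃ δ > 0, gt (x + δ) (y + δ) < t := by
    intro x y t hx hy h
    rw [hgtdef] at h
    obtain ⟨r, ⟨x', y', hx', hy', rfl⟩, hrt⟩ := exists_lt_of_csInf_lt (hne x y) h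
    refine ⟨min (x' - x) (y' - y) / 2, by
      have := lt_min (sub_pos.mpr hx') (sub_pos.mpr hy'); positivity, ?_⟩
    have h1 : x + min (x' - x) (y' - y) / 2 < x' := by
      have := min_le_left (x' - x) (y' - y)
      have := lt_min (sub_pos.mpr hx') (sub_pos.mpr hy')
      nlinarith [min_le_left (x' - x) (y' - y), lt_min (sub_pos.mpr hx') (sub_pos.mpr hy')]
    have h2 : y + min (x' - x) (y' - y) / 2 < y' := by
      nlinarith [min_le_right (x' - x) (y' - y), lt_min (sub_pos.mpr hx') (sub_pos.mpr hy')]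
    have hδ0 : (0:ℝ) ≤ min (x' - x) (y' - y) / 2 := by
      have := lt_min (sub_pos.mpr hx') (sub_pos.mpr hy'); positivity
    exact lt_of_le_of_lt (hub _ _ x' y' (by linarith) (by linarith) h1 h2) hrt
  refine ⟨hdom, ⟨hnn, hsym, hmono, h0y, ?_⟩, hstrong, ?_⟩
  · intro y t hy hyt
    obtain ⟨δ, hδ, h⟩ := hg5 y t hy hyt
    refine ⟨δ / 2, by linarith, ?_⟩
    exact lt_of_le_of_lt (hub (δ/2) (y + δ/2) δ (y + δ) (by linarith) (by linarith)
      (by linarith) (by linarith)) h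
  · rintro f ⟨hc, hm, hf0, hfnn, hfsub⟩
    refine ⟨hc, hm, hf0, hfnn, fun a b ha hb => ?_⟩
    exact le_trans (hm (Set.mem_Ici.mpr (hg0 a b ha hb))
      (Set.mem_Ici.mpr (hnn a b ha hb)) (hdom a b ha hb)) (hfsub a b ha hb)
end

section
/- Let g : [0,∞) × [0,∞) → [0,∞) be symmetric and increasing (x ≤ x' and y ≤ y' imply g(x,y) ≤ g(x',y')). Let D = {k/2^n : n ∈ ℕ, 0 < k ≤ 2^n} be the set of dyadic rationals in (0,1], and let (r_q)_{q ∈ D} be a family in (0,1] with r_1 = 1 such that: (C1) for all q, q' ∈ D, q < q' implies r_q < r_{q'}; and (C2) for all q, q' ∈ D with q + q' ≤ 1, g(r_q, r_{q'}) < r_{q+q'}. Then the function f : [0,∞) → [0,1] defined by f(t) = sup({q ∈ D : r_q < t} ∪ {0}) is a correction function for g; in particular f is continuous, increasing, f(0) = 0, and f(g(a,b)) ≤ f(a) + f(b) for all a, b ≥ 0. -/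
/-- The set of dyadic rationals `k / 2^n` in `(0, 1]`, as real numbers. -/
def dyadicIoc : Set ℝ :=
  {q : ℝ | ∃ n k : ℕ, 0 < k ∧ k ≤ 2 ^ n ∧ q = (k : ℝ) / 2 ^ n}

/-!
Write `f` for the supremum in question. Since `r` is increasing on the dyadics, `f (r q) = q` for
every dyadic `q`, so the monotone function `f` hits a dense subset of `[0, 1]` and is therefore
continuous. For the correction inequality, if a dyadic `q` with `r q < g a b` exceeded
`f a + f b`, one could choose dyadics `q₁ > f a`, `q₂ > f b` with `q₁ + q₂ < q`; then `a ≤ r q₁`,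
`b ≤ r q₂`, and (C2) with (C1) give `g a b ≤ g (r q₁) (r q₂) < r (q₁ + q₂) < r q < g a b`.
-/

open Set

theorem Monotone.continuous_of_exists_mem_Ioo {α : Type*} [LinearOrder α] [TopologicalSpace α]
    [OrderTopology α] {f : α → ℝ} {a b : ℝ} (hf : Monotone f) (hmaps : ∀ x, f x ∈ Icc a b)
    (hdense : ∀ c d, a ≤ c → c < d → d ≤ b → ∃ x, f x ∈ Ioo c d) : Continuous f := by
  by_cases hab : a < b
  · have : Nontrivial (Icc a b) :=
      nontrivial_of_lt ⟨a, left_mem_Icc.2 hab.le⟩ ⟨b, right_mem_Icc.2 hab.le⟩ hab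
    let F : α → Icc a b := codRestrict f _ hmaps
    have hF : Continuous F := by
      refine Monotone.continuous_of_denseRange (fun x y hxy => hf hxy) (dense_of_exists_between ?_)
      rintro ⟨c, hc⟩ ⟨d, hd⟩ hcd
      obtain ⟨x, hx⟩ := hdense c d hc.1 hcd hd.2
      exact ⟨F x, mem_range_self x, hx⟩
    exact continuous_subtype_val.comp hF
  · have hconst : f = fun _ => a := funext fun x =>
      le_antisymm ((hmaps x).2.trans (not_lt.1 hab)) (hmaps x).1
    exact hconst ▸ continuous_const

theorem dyadicIoc_subset_Ioc : dyadicIoc ⊆ Ioc 0 1 := by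
  rintro _ ⟨n, k, hk, hkn, rfl⟩
  refine ⟨by positivity, ?_⟩
  rw [div_le_one (by positivity)]
  exact_mod_cast hkn

theorem add_mem_dyadicIoc {q q' : ℝ} (hq : q ∈ dyadicIoc) (hq' : q' ∈ dyadicIoc)
    (hle : q + q' ≤ 1) : q + q' ∈ dyadicIoc := by
  obtain ⟨n, k, hk, -, rfl⟩ := hq
  obtain ⟨m, l, hl, -, rfl⟩ := hq'
  have hsum : (k : ℝ) / 2 ^ n + l / 2 ^ m = ((k * 2 ^ m + l * 2 ^ n : ℕ) : ℝ) / 2 ^ (n + m) := by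
    push_cast
    field_simp
    ring
  refine ⟨n + m, k * 2 ^ m + l * 2 ^ n, by positivity, ?_, hsum⟩
  rw [hsum, div_le_one (by positivity)] at hle
  exact_mod_cast hle

theorem exists_mem_dyadicIoc_between {x y : ℝ} (hx : 0 ≤ x) (hxy : x < y) (hy : y ≤ 1) :
    ∃ q ∈ dyadicIoc, x < q ∧ q < y := by
  obtain ⟨n, hn⟩ := exists_pow_lt_of_lt_one (sub_pos.2 hxy) (by norm_num : (1 / 2 : ℝ) < 1)
  have h2n : (0 : ℝ) < 2 ^ n := by positivity
  set k := ⌊x * 2 ^ n⌋₊ + 1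
  have hxk : x < k / 2 ^ n := by
    have := Nat.lt_floor_add_one (x * 2 ^ n)
    rw [lt_div_iff₀ h2n]
    push_cast [k]
    linarith
  have hky : (k : ℝ) / 2 ^ n < y := by
    have hfloor : (⌊x * 2 ^ n⌋₊ : ℝ) ≤ x * 2 ^ n := Nat.floor_le (by positivity)
    rw [div_pow, one_pow, div_lt_iff₀ h2n] at hn
    rw [div_lt_iff₀ h2n]
    push_cast [k]
    linarith
  have hkn : k ≤ 2 ^ n := by
    have : (k : ℝ) < 2 ^ n := (div_lt_one h2n).1 (hky.trans_le hy)
    exact_mod_cast this.le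
  exact ⟨k / 2 ^ n, ⟨n, k, Nat.succ_pos _, hkn, rfl⟩, hxk, hky⟩

noncomputable def dyadicSup (r : ℝ → ℝ) (t : ℝ) : ℝ :=
  sSup ({q : ℝ | q ∈ dyadicIoc ∧ r q < t} ∪ {0})

section dyadicSup

variable {r : ℝ → ℝ}

theorem dyadicSup_bddAbove (r : ℝ → ℝ) (t : ℝ) :
    BddAbove ({q : ℝ | q ∈ dyadicIoc ∧ r q < t} ∪ {0}) :=
  ⟨1, by rintro q (⟨hq, -⟩ | rfl) <;> [exact (dyadicIoc_subset_Ioc hq).2; exact zero_le_one]⟩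

theorem dyadicSup_nonneg (r : ℝ → ℝ) (t : ℝ) : 0 ≤ dyadicSup r t :=
  le_csSup (dyadicSup_bddAbove r t) (Or.inr rfl)

theorem le_dyadicSup {t q : ℝ} (hq : q ∈ dyadicIoc) (hrq : r q < t) : q ≤ dyadicSup r t :=
  le_csSup (dyadicSup_bddAbove r t) (Or.inl ⟨hq, hrq⟩)

theorem le_of_dyadicSup_lt {t q : ℝ} (hq : q ∈ dyadicIoc) (hlt : dyadicSup r t < q) : t ≤ r q :=
  not_lt.1 fun hrq => (le_dyadicSup hq hrq).not_gt hlt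

theorem dyadicSup_le {t c : ℝ} (hc : 0 ≤ c) (h : ∀ q ∈ dyadicIoc, r q < t → q ≤ c) :
    dyadicSup r t ≤ c :=
  csSup_le ⟨0, Or.inr rfl⟩ <| by rintro q (⟨hq, hrq⟩ | rfl) <;> [exact h q hq hrq; exact hc]

theorem dyadicSup_le_one (t : ℝ) : dyadicSup r t ≤ 1 :=
  dyadicSup_le zero_le_one fun _ hq _ => (dyadicIoc_subset_Ioc hq).2

theorem dyadicSup_mono : Monotone (dyadicSup r) := fun _ _ hst =>
  dyadicSup_le (dyadicSup_nonneg r _) fun _ hq hrq => le_dyadicSup hq (hrq.trans_le hst)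

theorem dyadicSup_zero (hr : ∀ q ∈ dyadicIoc, 0 ≤ r q) : dyadicSup r 0 = 0 :=
  le_antisymm (dyadicSup_le le_rfl fun q hq hrq => absurd (hr q hq) hrq.not_ge)
    (dyadicSup_nonneg r 0)

theorem dyadicSup_le_of_le (hC1 : StrictMonoOn r dyadicIoc) {s q : ℝ} (hq : q ∈ dyadicIoc)
    (hs : s ≤ r q) : dyadicSup r s ≤ q :=
  dyadicSup_le (dyadicIoc_subset_Ioc hq).1.le fun _ hq' hrq' =>
    not_lt.1 fun hlt => (hC1 hq hq' hlt).not_gt (hrq'.trans_le hs)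

theorem leftInvOn_dyadicSup (hC1 : StrictMonoOn r dyadicIoc) :
    LeftInvOn (dyadicSup r) r dyadicIoc := by
  intro q hq
  refine le_antisymm (dyadicSup_le_of_le hC1 hq le_rfl) (le_of_forall_lt fun c hc => ?_)
  obtain ⟨q', hq', hcq', hq'q⟩ :=
    exists_mem_dyadicIoc_between (le_max_right c 0) (max_lt hc (dyadicIoc_subset_Ioc hq).1)
      (dyadicIoc_subset_Ioc hq).2
  exact (le_max_left c 0).trans_lt (hcq'.trans_le (le_dyadicSup hq' (hC1 hq' hq hq'q)))

theorem continuous_dyadicSup (hC1 : StrictMonoOn r dyadicIoc) : Continuous (dyadicSup r) := by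
  refine dyadicSup_mono.continuous_of_exists_mem_Ioo
    (fun t => ⟨dyadicSup_nonneg r t, dyadicSup_le_one t⟩) fun c d hc hcd hd => ?_
  obtain ⟨q, hq, hcq, hqd⟩ := exists_mem_dyadicIoc_between hc hcd hd
  exact ⟨r q, by rw [leftInvOn_dyadicSup hC1 hq]; exact ⟨hcq, hqd⟩⟩

theorem dyadicSup_le_add (hC1 : StrictMonoOn r dyadicIoc) {g : ℝ → ℝ → ℝ}
    (hmono : ∀ a a' b b', 0 ≤ a → 0 ≤ b → a ≤ a' → b ≤ b' → g a b ≤ g a' b')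
    (hC2 : ∀ q ∈ dyadicIoc, ∀ q' ∈ dyadicIoc, q + q' ≤ 1 → g (r q) (r q') < r (q + q'))
    {a b : ℝ} (ha : 0 ≤ a) (hb : 0 ≤ b) :
    dyadicSup r (g a b) ≤ dyadicSup r a + dyadicSup r b := by
  have hfa := dyadicSup_nonneg r a
  have hfb := dyadicSup_nonneg r b
  refine dyadicSup_le (add_nonneg hfa hfb) fun q hq hrq => ?_
  by_contra! hlt
  set δ := (q - dyadicSup r a - dyadicSup r b) / 2 with hδ
  have hq_le_one := (dyadicIoc_subset_Ioc hq).2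
  obtain ⟨q₁, hq₁, ha₁, h₁⟩ := exists_mem_dyadicIoc_between hfa
    (by linarith : dyadicSup r a < dyadicSup r a + δ) (by linarith)
  obtain ⟨q₂, hq₂, hb₂, h₂⟩ := exists_mem_dyadicIoc_between hfb
    (by linarith : dyadicSup r b < dyadicSup r b + δ) (by linarith)
  have hsum : q₁ + q₂ < q := by linarith
  have hsum_le : q₁ + q₂ ≤ 1 := hsum.le.trans hq_le_one
  refine lt_irrefl (g a b) ?_
  calc g a b ≤ g (r q₁) (r q₂) :=
        hmono _ _ _ _ ha hb (le_of_dyadicSup_lt hq₁ ha₁) (le_of_dyadicSup_lt hq₂ hb₂)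
    _ < r (q₁ + q₂) := hC2 q₁ hq₁ q₂ hq₂ hsum_le
    _ < r q := hC1 (add_mem_dyadicIoc hq₁ hq₂ hsum_le) hq hsum
    _ < g a b := hrq

end dyadicSup

theorem dyadic_family_gives_correction_general
    (g : ℝ → ℝ → ℝ)
    (hmono : ∀ a a' b b', 0 ≤ a → 0 ≤ b → a ≤ a' → b ≤ b' → g a b ≤ g a' b')
    (r : ℝ → ℝ)
    (hr : ∀ q ∈ dyadicIoc, r q ∈ Set.Ioc (0 : ℝ) 1)
    (hC1 : ∀ q ∈ dyadicIoc, ∀ q' ∈ dyadicIoc, q < q' → r q < r q')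
    (hC2 : ∀ q ∈ dyadicIoc, ∀ q' ∈ dyadicIoc, q + q' ≤ 1 →
      g (r q) (r q') < r (q + q'))
    (f : ℝ → ℝ)
    (hf : f = fun t => sSup ({q : ℝ | q ∈ dyadicIoc ∧ r q < t} ∪ {0})) :
    IsCorrectionFunction f g ∧ ∀ t, 0 ≤ t → f t ∈ Set.Icc (0 : ℝ) 1 := by
  have hrmono : StrictMonoOn r dyadicIoc := fun q hq q' hq' => hC1 q hq q' hq'
  obtain rfl : f = dyadicSup r := hf
  exact ⟨⟨(continuous_dyadicSup hrmono).continuousOn, dyadicSup_mono.monotoneOn _,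
      dyadicSup_zero fun q hq => (hr q hq).1.le, fun a _ => dyadicSup_nonneg r a,
      fun a b ha hb => dyadicSup_le_add hrmono hmono hC2 ha hb⟩,
    fun t _ => ⟨dyadicSup_nonneg r t, dyadicSup_le_one t⟩⟩

/-- Given a symmetric increasing `g` and a family `(r_q)` over the dyadics in
`(0,1]` with `r 1 = 1`, increasing (C1) and subadditive with respect to `g`
(C2), the function `f t = sup ({q ∈ D : r q < t} ∪ {0})` is a correction
function for `g` taking values in `[0,1]`. -/
theorem dyadic_family_gives_correction
    (g : ℝ → ℝ → ℝ)
    (hsym : ∀ a b, 0 ≤ a → 0 ≤ b → g a b = g b a)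
    (hmono : ∀ a a' b b', 0 ≤ a → 0 ≤ b → a ≤ a' → b ≤ b' → g a b ≤ g a' b')
    (r : ℝ → ℝ)
    (hr : ∀ q ∈ dyadicIoc, r q ∈ Set.Ioc (0 : ℝ) 1)
    (hr1 : r 1 = 1)
    (hC1 : ∀ q ∈ dyadicIoc, ∀ q' ∈ dyadicIoc, q < q' → r q < r q')
    (hC2 : ∀ q ∈ dyadicIoc, ∀ q' ∈ dyadicIoc, q + q' ≤ 1 →
      g (r q) (r q') < r (q + q'))
    (f : ℝ → ℝ)
    (hf : f = fun t => sSup ({q : ℝ | q ∈ dyadicIoc ∧ r q < t} ∪ {0})) :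
    IsCorrectionFunction f g ∧ ∀ t, 0 ≤ t → f t ∈ Set.Icc (0 : ℝ) 1 :=
  dyadic_family_gives_correction_general g hmono r hr hC1 hC2 f hf
end

section
/- Let G be a set, let h be a bounded pre-metric on G, and let f be a correction function for the triangle deficiency TD_h of h. Then f ∘ h is a pseudometric on G: it is symmetric, vanishes on the diagonal, and satisfies the triangle inequality (f∘h)(x,z) ≤ (f∘h)(x,y) + (f∘h)(y,z) for all x, y, z ∈ G. -/
/-- If `f` is a correction function for the triangle deficiency of a bounded
pre-metric `h`, then `f ∘ h` is a pseudometric: symmetric, vanishing on the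
diagonal, and satisfying the triangle inequality. -/
theorem correction_comp_preMetric_isPseudometric
    {G : Type*} (h : G → G → ℝ)
    (hpm : IsPreMetric h) (hbd : IsBoundedPreMetric h)
    (f : ℝ → ℝ) (hf : IsCorrectionFunction f (triangleDeficiency h)) :
    (∀ x y : G, f (h x y) = f (h y x)) ∧
    (∀ x : G, f (h x x) = 0) ∧
    (∀ x y z : G, f (h x z) ≤ f (h x y) + f (h y z)) := by
  obtain ⟨hnn, hrefl, hsymm⟩ := hpm
  obtain ⟨C, hC⟩ := hbd
  obtain ⟨hcont, hmono, hf0, hfnn, hfsub⟩ := hf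
  refine ⟨fun x y => by rw [hsymm x y], fun x => by rw [(hrefl x x).mpr rfl, hf0], ?_⟩
  intro x y z
  have hmem : h x z ∈ {r : ℝ | ∃ x' y' z' : G, h x' y' ≤ h x y ∧ h y' z' ≤ h y z ∧ r = h x' z'} :=
    ⟨x, y, z, le_refl _, le_refl _, rfl⟩
  have hbdd : BddAbove {r : ℝ | ∃ x' y' z' : G, h x' y' ≤ h x y ∧ h y' z' ≤ h y z ∧ r = h x' z'} :=
    ⟨C, fun r ⟨a, b, c, _, _, hr⟩ => hr ▸ hC a c⟩
  have hle : h x z ≤ triangleDeficiency h (h x y) (h y z) := le_csSup hbdd hmem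
  have hTDnn : 0 ≤ triangleDeficiency h (h x y) (h y z) := (hnn x z).trans hle
  calc f (h x z) ≤ f (triangleDeficiency h (h x y) (h y z)) :=
        hmono (hnn x z) hTDnn hle
    _ ≤ f (h x y) + f (h y z) := hfsub _ _ (hnn x y) (hnn y z)
end

section
/- Let G be a set and let h be a bounded, locally continuous pre-metric on G. Then there exists a correction function f for the triangle deficiency TD_h of h such that f ∘ h is a metric on G which is uniformly equivalent to h. -/
/-- Invariant for the dyadic gauge construction. -/
def GoodFn (g : ℝ → ℝ → ℝ) (C : ℝ) (n : ℕ) (w : ℕ → ℝ) (e : ℝ) : Prop :=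
  (∀ k, 1 ≤ k → k ≤ 2^n → 0 < w k) ∧
  (∀ k l, 1 ≤ k → k < l → l ≤ 2^n → w k < w l) ∧
  w (2^n) = C ∧
  w 1 ≤ C / 2^n ∧
  0 < e ∧
  (∀ j l, 1 ≤ j → 1 ≤ l → j + l ≤ 2^n → g (w j + e) (w l + e) ≤ w (j + l))

lemma goodBase (g : ℝ → ℝ → ℝ) (C : ℝ) (hCpos : 0 < C) :
    GoodFn g C 0 (fun _ => C) 1 := by
  refine ⟨fun k _ _ => hCpos, fun k l hk hkl hl => absurd hl (by omega), rfl,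
    by norm_num, one_pos, fun j l hj hl hsum => absurd hsum (by omega)⟩

lemma goodStep (g : ℝ → ℝ → ℝ) (C : ℝ) (hCpos : 0 < C)
    (Hmono : ∀ a a' b b', 0 ≤ a → 0 ≤ b → a ≤ a' → b ≤ b' → g a b ≤ g a' b')
    (Hsym : ∀ a b, 0 ≤ a → 0 ≤ b → g a b = g b a)
    (HP : ∀ y t, 0 ≤ y → y < t → ∃ δ > 0, g δ (y + δ) < t)
    (n : ℕ) (w : ℕ → ℝ) (e : ℝ) (hG : GoodFn g C n w e) :
    ∃ w' e', GoodFn g C (n+1) w' e' ∧ ∀ k, w' (2*k) = w k := by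
  obtain ⟨G1, G2, G3, G4, G5, G6⟩ := hG
  have hone : (1:ℕ) ≤ 2^n := Nat.one_le_two_pow
  have hp : (2:ℕ)^(n+1) = 2 * 2^n := by rw [pow_succ]; ring
  have w1pos : 0 < w 1 := G1 1 le_rfl hone
  set η : ℕ → ℝ := fun j => min e (w (j+1) - w j) / 2 with hηdef
  have ηpos : ∀ j, 1 ≤ j → j + 1 ≤ 2^n → 0 < η j := by
    intro j hj hj2
    have := G2 j (j+1) hj (by omega) hj2
    have h1 : 0 < min e (w (j+1) - w j) := lt_min G5 (by linarith)
    simp only [hηdef]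
    linarith
  have ηe : ∀ j, η j ≤ e / 2 := by
    intro j
    have := min_le_left e (w (j+1) - w j)
    simp only [hηdef]
    linarith
  have ηgap : ∀ j, w j + η j ≤ (w j + w (j+1)) / 2 := by
    intro j
    have := min_le_right e (w (j+1) - w j)
    simp only [hηdef]
    linarith
  -- choose the δ's
  have hD : ∀ j : ℕ, ∃ d : ℝ, 0 < d ∧ (j = 0 → g d d < w 1) ∧
      (1 ≤ j → j + 1 ≤ 2^n → g d (w j + d) < w j + η j) := by
    intro j
    rcases Nat.eq_zero_or_pos j with rfl | hj
    · obtain ⟨d, hd, hlt⟩ := HP 0 (w 1) le_rfl w1pos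
      exact ⟨d, hd, fun _ => by simpa using hlt, fun h => absurd h (by omega)⟩
    · by_cases hj2 : j + 1 ≤ 2^n
      · obtain ⟨d, hd, hlt⟩ := HP (w j) (w j + η j) (G1 j hj (by omega)).le
          (by have := ηpos j hj hj2; linarith)
        exact ⟨d, hd, fun h => absurd h (by omega), fun _ _ => by
          have : g d (w j + d) = g d (w j + d) := rfl
          calc g d (w j + d) = g d (w j + d) := rfl
            _ < w j + η j := by rw [add_comm (w j) d] at hlt ⊢; exact hlt⟩
      · exact ⟨1, one_pos, fun h => absurd h (by omega), fun _ h => absurd h hj2⟩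
  choose Df Dfpos Df0 Dfj using hD
  have hne : (Finset.range (2^n)).Nonempty := ⟨0, Finset.mem_range.mpr (by positivity)⟩
  set Dmin : ℝ := (Finset.range (2^n)).inf' hne Df with hDmin
  have Dminpos : 0 < Dmin := by
    rw [hDmin, Finset.lt_inf'_iff]
    exact fun j _ => Dfpos j
  have Dminle : ∀ j, j < 2^n → Dmin ≤ Df j := fun j hj =>
    Finset.inf'_le _ (Finset.mem_range.mpr hj)
  set δ : ℝ := min (Dmin/2) (min (w 1/2) (C / 2^(n+1))) with hδdef
  set e' : ℝ := min (Dmin/2) (e/2) with he'def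
  have δpos : 0 < δ := by
    have : (0:ℝ) < C / 2^(n+1) := by positivity
    simp only [hδdef, lt_min_iff]
    refine ⟨by linarith, by constructor <;> linarith⟩
  have e'pos : 0 < e' := by
    simp only [he'def, lt_min_iff]; constructor <;> linarith
  have hδD : δ ≤ Dmin/2 := min_le_left _ _
  have hδw1 : δ ≤ w 1 / 2 := le_trans (min_le_right _ _) (min_le_left _ _)
  have hδC : δ ≤ C / 2^(n+1) := le_trans (min_le_right _ _) (min_le_right _ _)
  have he'D : e' ≤ Dmin/2 := min_le_left _ _
  have he'e : e' ≤ e/2 := min_le_right _ _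
  set w' : ℕ → ℝ := fun k => if k % 2 = 0 then w (k/2) else if k = 1 then δ else w (k/2) + η (k/2)
    with hw'def
  have hev : ∀ j, w' (2*j) = w j := by
    intro j
    simp only [hw'def]
    rw [if_pos (by omega)]
    congr 1; omega
  have h1' : w' 1 = δ := by simp [hw'def]
  have hod : ∀ j, 1 ≤ j → w' (2*j+1) = w j + η j := by
    intro j hj
    simp only [hw'def]
    rw [if_neg (by omega), if_neg (by omega)]
    have : (2*j+1)/2 = j := by omega
    rw [this]
  -- positivity of w'
  have pos' : ∀ k, 1 ≤ k → k ≤ 2^(n+1) → 0 < w' k := by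
    intro k hk1 hk2
    obtain ⟨j, hj | hj⟩ := Nat.even_or_odd' k
    · subst hj
      rw [hev]
      exact G1 j (by omega) (by omega)
    · subst hj
      rcases Nat.eq_zero_or_pos j with rfl | hj1
      · simpa [h1'] using δpos
      · rw [hod j hj1]
        have := G1 j hj1 (by omega)
        have := ηpos j hj1 (by omega)
        linarith
  have nn' : ∀ k, 1 ≤ k → k ≤ 2^(n+1) → 0 ≤ w' k := fun k h1 h2 => (pos' k h1 h2).le
  -- adjacent monotonicity
  have adj : ∀ k, 1 ≤ k → k + 1 ≤ 2^(n+1) → w' k < w' (k+1) := by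
    intro k hk1 hk2
    obtain ⟨j, hj | hj⟩ := Nat.even_or_odd' k
    · subst hj
      have hj1 : 1 ≤ j := by omega
      rw [hev, show 2*j+1 = 2*j+1 from rfl, hod j hj1]
      have := ηpos j hj1 (by omega)
      linarith
    · subst hj
      rcases Nat.eq_zero_or_pos j with rfl | hj1
      · have : (2*0+1) = 1 := by norm_num
        rw [this, h1', show 1+1 = 2*1 from rfl, hev]
        linarith
      · rw [hod j hj1, show 2*j+1+1 = 2*(j+1) from by ring, hev]
        have h2 : j + 1 ≤ 2^n := by omega
        have := G2 j (j+1) hj1 (by omega) h2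
        have := ηgap j
        linarith
  have mono' : ∀ l k, 1 ≤ k → k < l → l ≤ 2^(n+1) → w' k < w' l := by
    intro l
    induction l with
    | zero => intro k _ h _; omega
    | succ m ih =>
      intro k hk hkl hle
      rcases (by omega : k = m ∨ k < m) with rfl | h
      · exact adj k hk hle
      · exact lt_trans (ih k hk h (by omega)) (adj m (by omega) hle)
  refine ⟨w', e', ⟨pos', fun k l hk hkl hl => mono' l k hk hkl hl, ?_, ?_, e'pos, ?_⟩, hev⟩
  · rw [hp, hev]; exact G3
  · rw [h1']
    exact hδC
  -- the constraint
  · have hEO : ∀ j L, 1 ≤ j → 1 ≤ L → 2*j + L ≤ 2^(n+1) →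
        g (w' (2*j) + e') (w' L + e') ≤ w' (2*j + L) := by
      intro j L hj hL hsum
      obtain ⟨l, hl | hl⟩ := Nat.even_or_odd' L
      · subst hl
        have hl1 : 1 ≤ l := by omega
        have hjl : j + l ≤ 2^n := by omega
        rw [hev, hev, show 2*j + 2*l = 2*(j+l) from by ring, hev]
        have wjnn : 0 ≤ w j := (G1 j hj (by omega)).le
        have wlnn : 0 ≤ w l := (G1 l hl1 (by omega)).le
        calc g (w j + e') (w l + e')
            ≤ g (w j + e) (w l + e) := by
              apply Hmono <;> first | linarith | positivity
          _ ≤ w (j + l) := G6 j l hj hl1 hjl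
      · subst hl
        rcases Nat.eq_zero_or_pos l with rfl | hl1
        · -- L = 1
          have hj2 : j + 1 ≤ 2^n := by omega
          have hDj := Dfj j hj hj2
          have hDle : Dmin ≤ Df j := Dminle j (by omega)
          rw [show 2*0+1 = 1 from rfl, h1', hev, show 2*j + 1 = 2*j+1 from rfl, hod j hj]
          have wjnn : 0 ≤ w j := (G1 j hj (by omega)).le
          calc g (w j + e') (δ + e')
              = g (δ + e') (w j + e') := Hsym _ _ (by linarith) (by linarith)
            _ ≤ g (Df j) (w j + Df j) := by
                apply Hmono <;> linarith
            _ ≤ w j + η j := hDj.le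
        · -- L = 2*l+1, l ≥ 1
          have hjl : j + l ≤ 2^n - 1 := by omega
          have hjl' : j + l ≤ 2^n := by omega
          have hl2 : l + 1 ≤ 2^n := by omega
          rw [hev, hod l hl1, show 2*j + (2*l+1) = 2*(j+l)+1 from by ring,
            hod (j+l) (by omega)]
          have wjnn : 0 ≤ w j := (G1 j hj (by omega)).le
          have wlnn : 0 ≤ w l := (G1 l hl1 (by omega)).le
          have hηl := ηe l
          have hηlpos := ηpos l hl1 hl2
          have hηjl := ηpos (j+l) (by omega) (by omega)
          calc g (w j + e') (w l + η l + e')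
              ≤ g (w j + e) (w l + e) := by apply Hmono <;> linarith
            _ ≤ w (j + l) := G6 j l hj hl1 hjl'
            _ ≤ w (j+l) + η (j+l) := by linarith
    intro J L hJ hL hsum
    obtain ⟨j, hj | hj⟩ := Nat.even_or_odd' J
    · subst hj; exact hEO j L (by omega) hL hsum
    · subst hj
      obtain ⟨l, hl | hl⟩ := Nat.even_or_odd' L
      · -- odd, even : use symmetry
        subst hl
        have hl1 : 1 ≤ l := by omega
        rw [show 2*j+1 + 2*l = 2*l + (2*j+1) from by ring]
        rw [Hsym _ _ (by
            have := nn' (2*j+1) hJ (by omega); linarith)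
          (by have := nn' (2*l) hL (by omega); linarith)]
        exact hEO l (2*j+1) hl1 (by omega) (by omega)
      · -- odd, odd
        subst hl
        have hsum2 : j + l + 1 ≤ 2^n := by omega
        rw [show 2*j+1 + (2*l+1) = 2*(j+l+1) from by ring, hev]
        rcases Nat.eq_zero_or_pos j with rfl | hj1
        · rcases Nat.eq_zero_or_pos l with rfl | hl1
          · -- both are 1
            have hD0 := Df0 0 rfl
            have hDle : Dmin ≤ Df 0 := Dminle 0 (by positivity)
            rw [show 2*0+1 = 1 from rfl, h1']
            calc g (δ + e') (δ + e')
                ≤ g (Df 0) (Df 0) := by apply Hmono <;> linarith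
              _ ≤ w 1 := hD0.le
              _ = w (0 + 0 + 1) := rfl
          · -- j = 0, l ≥ 1
            have hl2 : 1 + l ≤ 2^n := by omega
            rw [show 2*0+1 = 1 from rfl, h1', hod l hl1]
            have wlnn : 0 ≤ w l := (G1 l hl1 (by omega)).le
            have hηl := ηe l
            have hηlpos := ηpos l hl1 (by omega)
            calc g (δ + e') (w l + η l + e')
                ≤ g (w 1 + e) (w l + e) := by apply Hmono <;> linarith
              _ ≤ w (1 + l) := G6 1 l le_rfl hl1 hl2
              _ = w (0 + l + 1) := by congr 1 <;> omega
        · -- j ≥ 1, l = 0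
          rcases Nat.eq_zero_or_pos l with rfl | hl1
          · have hj2 : 1 + j ≤ 2^n := by omega
            rw [show 2*0+1 = 1 from rfl, h1', hod j hj1]
            have wjnn : 0 ≤ w j := (G1 j hj1 (by omega)).le
            have hηj := ηe j
            have hηjpos := ηpos j hj1 (by omega)
            calc g (w j + η j + e') (δ + e')
                = g (δ + e') (w j + η j + e') := by
                  apply Hsym <;>
                    first
                      | (have := ηpos j hj1 (by omega); linarith)
                      | linarith
              _ ≤ g (w 1 + e) (w j + e) := by apply Hmono <;> linarith
              _ ≤ w (1 + j) := G6 1 j le_rfl hj1 hj2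
              _ = w (j + 0 + 1) := by congr 1 <;> omega
          · -- j, l ≥ 1
            have hjl : j + (l+1) ≤ 2^n := by omega
            have hl2 : l + 1 ≤ 2^n := by omega
            rw [hod j hj1, hod l hl1]
            have wjnn : 0 ≤ w j := (G1 j hj1 (by omega)).le
            have wlnn : 0 ≤ w l := (G1 l hl1 (by omega)).le
            have hηj := ηe j
            have hηjpos := ηpos j hj1 (by omega)
            have hηl := ηgap l
            have hηlpos := ηpos l hl1 (by omega)
            have hwl1 := G2 l (l+1) hl1 (by omega) hl2
            calc g (w j + η j + e') (w l + η l + e')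
                ≤ g (w j + e) (w (l+1) + e) := by apply Hmono <;> linarith
              _ ≤ w (j + (l+1)) := G6 j (l+1) hj1 (by omega) hjl
              _ = w (j + l + 1) := rfl

set_option maxHeartbeats 1000000 in
lemma corrAux (g : ℝ → ℝ → ℝ) (C : ℝ) (hCpos : 0 < C)
    (Hmono : ∀ a a' b b', 0 ≤ a → 0 ≤ b → a ≤ a' → b ≤ b' → g a b ≤ g a' b')
    (Hsym : ∀ a b, 0 ≤ a → 0 ≤ b → g a b = g b a)
    (HP : ∀ y t, 0 ≤ y → y < t → ∃ δ > 0, g δ (y + δ) < t) :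
    ∃ f : ℝ → ℝ, Continuous f ∧ Monotone f ∧ f 0 = 0 ∧ (∀ t, 0 ≤ f t) ∧
      (∀ t, 0 < t → 0 < f t) ∧ (∀ a b, 0 ≤ a → 0 ≤ b → f (g a b) ≤ f a + f b) := by
  obtain ⟨W, E, hG, hcomp⟩ : ∃ (W : ℕ → ℕ → ℝ) (E : ℕ → ℝ),
      (∀ n, GoodFn g C n (W n) (E n)) ∧ ∀ n k, W (n+1) (2*k) = W n k := by
    have step := goodStep g C hCpos Hmono Hsym HP
    let T : ℕ → Type := fun n => {p : (ℕ → ℝ) × ℝ // GoodFn g C n p.1 p.2}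
    let succ : ∀ n, T n → T (n+1) := fun n p =>
      ⟨⟨Classical.choose (step n p.1.1 p.1.2 p.2),
        Classical.choose (Classical.choose_spec (step n p.1.1 p.1.2 p.2))⟩,
        (Classical.choose_spec (Classical.choose_spec (step n p.1.1 p.1.2 p.2))).1⟩
    let F : ∀ n, T n := fun n => Nat.rec ⟨⟨fun _ => C, 1⟩, goodBase g C hCpos⟩ succ n
    refine ⟨fun n => (F n).1.1, fun n => (F n).1.2, fun n => (F n).2, fun n k => ?_⟩
    exact (Classical.choose_spec (Classical.choose_spec
      (step n (F n).1.1 (F n).1.2 (F n).2))).2 k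
  have G1 : ∀ n k, 1 ≤ k → k ≤ 2^n → 0 < W n k := fun n => (hG n).1
  have G2 : ∀ n k l, 1 ≤ k → k < l → l ≤ 2^n → W n k < W n l := fun n => (hG n).2.1
  have G4 : ∀ n, W n 1 ≤ C / 2^n := fun n => (hG n).2.2.2.1
  have G5 : ∀ n, 0 < E n := fun n => (hG n).2.2.2.2.1
  have G6 : ∀ n j l, 1 ≤ j → 1 ≤ l → j + l ≤ 2^n →
      g (W n j + E n) (W n l + E n) ≤ W n (j + l) := fun n => (hG n).2.2.2.2.2
  have lift : ∀ n m k, W (n + m) (2^m * k) = W n k := by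
    intro n m k
    induction m with
    | zero => simp
    | succ m ih =>
      have h2 : (2:ℕ)^(m+1) * k = 2 * (2^m * k) := by ring
      calc W (n + (m+1)) (2^(m+1) * k) = W ((n+m)+1) (2*(2^m * k)) := by rw [h2]; rfl
        _ = W (n+m) (2^m * k) := hcomp (n+m) _
        _ = W n k := ih
  have hple : ∀ m k : ℕ, 1 ≤ k → 1 ≤ 2^m * k := by
    intro m k hk
    have h2 : 1 ≤ (2:ℕ)^m := Nat.one_le_two_pow
    calc 1 = 1 * 1 := rfl
      _ ≤ 2^m * k := Nat.mul_le_mul h2 hk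
  have crossLE : ∀ n k m k', 1 ≤ k → 1 ≤ k' → k' ≤ 2^m → k * 2^m ≤ k' * 2^n →
      W n k ≤ W m k' := by
    intro n k m k' hk hk' hk2 hle
    have e1 : W n k = W (n+m) (2^m * k) := (lift n m k).symm
    have e2 : W m k' = W (n+m) (2^n * k') := by
      rw [Nat.add_comm]; exact (lift m n k').symm
    rw [e1, e2]
    have hle' : 2^m * k ≤ 2^n * k' := by
      calc 2^m * k = k * 2^m := Nat.mul_comm _ _
        _ ≤ k' * 2^n := hle
        _ = 2^n * k' := Nat.mul_comm _ _
    have hb : 2^n * k' ≤ 2^(n+m) := by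
      calc 2^n * k' ≤ 2^n * 2^m := Nat.mul_le_mul_left _ hk2
        _ = 2^(n+m) := (pow_add 2 n m).symm
    rcases Nat.eq_or_lt_of_le hle' with heq | hlt
    · rw [heq]
    · exact (G2 (n+m) _ _ (hple m k hk) hlt hb).le
  have L2 : ∀ n m k k', 1 ≤ k → k ≤ 2^n → 1 ≤ k' → k' ≤ 2^m →
      k * 2^m + k' * 2^n ≤ 2^(n+m) →
      g (W n k) (W m k') ≤ W (n+m) (k * 2^m + k' * 2^n) := by
    intro n m k k' hk1 hk2 hk1' hk2' hsum
    have e1 : W n k = W (n+m) (2^m * k) := (lift n m k).symm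
    have e2 : W m k' = W (n+m) (2^n * k') := by
      rw [Nat.add_comm]; exact (lift m n k').symm
    have ha1 : 1 ≤ 2^m * k := hple m k hk1
    have hb1 : 1 ≤ 2^n * k' := hple n k' hk1'
    have hsum' : 2^m * k + 2^n * k' ≤ 2^(n+m) := by
      rw [Nat.mul_comm (2^m) k, Nat.mul_comm (2^n) k']; exact hsum
    have ha2 : 2^m * k ≤ 2^(n+m) := by omega
    have hb2 : 2^n * k' ≤ 2^(n+m) := by omega
    have hG6 := G6 (n+m) (2^m * k) (2^n * k') ha1 hb1 hsum'
    have hana : 0 ≤ W (n+m) (2^m * k) := (G1 (n+m) _ ha1 ha2).le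
    have hbnb : 0 ≤ W (n+m) (2^n * k') := (G1 (n+m) _ hb1 hb2).le
    rw [e1, e2]
    calc g (W (n+m) (2^m * k)) (W (n+m) (2^n * k'))
        ≤ g (W (n+m) (2^m * k) + E (n+m)) (W (n+m) (2^n * k') + E (n+m)) :=
          Hmono _ _ _ _ hana hbnb (by linarith [G5 (n+m)]) (by linarith [G5 (n+m)])
      _ ≤ W (n+m) (2^m * k + 2^n * k') := hG6
      _ = W (n+m) (k * 2^m + k' * 2^n) := by
          rw [Nat.mul_comm (2^m) k, Nat.mul_comm (2^n) k']
  set A : ℝ → Set ℝ := fun t => insert (1:ℝ)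
    {q | ∃ n k : ℕ, 1 ≤ k ∧ k ≤ 2^n ∧ q = (k:ℝ)/2^n ∧ t ≤ W n k} with hA
  set f : ℝ → ℝ := fun t => sInf (A t) with hf
  have Ane : ∀ t, (A t).Nonempty := fun t => ⟨1, Set.mem_insert _ _⟩
  have Anonneg : ∀ t q, q ∈ A t → 0 ≤ q := by
    intro t q hq
    rcases hq with rfl | ⟨n, k, hk1, hk2, rfl, _⟩
    · norm_num
    · positivity
  have Able : ∀ t q, q ∈ A t → q ≤ 1 := by
    intro t q hq
    rcases hq with rfl | ⟨n, k, hk1, hk2, rfl, _⟩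
    · exact le_rfl
    · rw [div_le_one (by positivity)]
      exact_mod_cast hk2
  have Abdd : ∀ t, BddBelow (A t) := fun t => ⟨0, fun q hq => Anonneg t q hq⟩
  have fnn : ∀ t, 0 ≤ f t := fun t => le_csInf (Ane t) (Anonneg t)
  have fle1 : ∀ t, f t ≤ 1 := fun t => csInf_le (Abdd t) (Set.mem_insert _ _)
  have fmono : Monotone f := by
    intro t t' htt'
    apply csInf_le_csInf (Abdd t) (Ane t')
    intro q hq
    rcases hq with rfl | ⟨n, k, h1, h2, rfl, hle⟩
    · exact Set.mem_insert _ _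
    · exact Set.mem_insert_iff.mpr (Or.inr ⟨n, k, h1, h2, rfl, le_trans htt' hle⟩)
  have H2 : ∀ (t : ℝ) (n k : ℕ), 1 ≤ k → k ≤ 2^n → t ≤ W n k → f t ≤ (k:ℝ)/2^n := by
    intro t n k h1 h2 hle
    exact csInf_le (Abdd t) (Set.mem_insert_iff.mpr (Or.inr ⟨n, k, h1, h2, rfl, hle⟩))
  have H1 : ∀ (t : ℝ) (n k : ℕ), 1 ≤ k → k ≤ 2^n → f t < (k:ℝ)/2^n → t ≤ W n k := by
    intro t n k h1 h2 hlt
    obtain ⟨s, hs, hslt⟩ := exists_lt_of_csInf_lt (Ane t) hlt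
    rcases hs with rfl | ⟨m, k', h1', h2', rfl, hle⟩
    · exfalso
      have hle1 : (k:ℝ)/2^n ≤ 1 := by
        rw [div_le_one (by positivity)]
        exact_mod_cast h2
      linarith
    · refine le_trans hle (crossLE m k' n k h1' h1 h2 ?_)
      have hr : (k':ℝ) * 2^n < (k:ℝ) * 2^m := by
        rw [div_lt_div_iff₀ (by positivity) (by positivity)] at hslt
        exact hslt
      have : k' * 2^n < k * 2^m := by exact_mod_cast hr
      exact this.le
  have H3 : ∀ (t : ℝ) (n k : ℕ), 1 ≤ k → k ≤ 2^n → W n k < t → (k:ℝ)/2^n ≤ f t := by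
    intro t n k h1 h2 hlt
    by_contra hcon
    push_neg at hcon
    exact absurd (H1 t n k h1 h2 hcon) (not_le.mpr hlt)
  have hhalf : ((1:ℝ)/2) < 1 := by norm_num
  have hpoweq : ∀ n : ℕ, ((1:ℝ)/2)^n = 1/2^n := by
    intro n; rw [div_pow, one_pow]
  have f0 : f 0 = 0 := by
    refine le_antisymm ?_ (fnn 0)
    by_contra hcon
    push_neg at hcon
    obtain ⟨n, hn⟩ := exists_pow_lt_of_lt_one hcon hhalf
    rw [hpoweq] at hn
    have h2 := H2 0 n 1 le_rfl Nat.one_le_two_pow (G1 n 1 le_rfl Nat.one_le_two_pow).le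
    push_cast at h2
    linarith
  have fpos : ∀ t, 0 < t → 0 < f t := by
    intro t ht
    obtain ⟨n, hn⟩ := exists_pow_lt_of_lt_one (div_pos ht hCpos) hhalf
    rw [hpoweq] at hn
    have hpow : (0:ℝ) < 2^n := by positivity
    rw [div_lt_div_iff₀ hpow hCpos] at hn
    have hWt : W n 1 < t := by
      have h4 := G4 n
      have : C / 2^n < t := by rw [div_lt_iff₀ hpow]; linarith
      linarith
    have := H3 t n 1 le_rfl Nat.one_le_two_pow hWt
    have h0 : (0:ℝ) < (1:ℕ)/2^n := by positivity
    calc (0:ℝ) < ((1:ℕ):ℝ)/2^n := by positivity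
      _ ≤ f t := this
  have fsub : ∀ a b, 0 ≤ a → 0 ≤ b → f (g a b) ≤ f a + f b := by
    intro a b ha hb
    refine le_of_forall_pos_le_add ?_
    intro ε hε
    rcases le_or_gt 1 (f a + f b + ε) with h1 | h1
    · linarith [fle1 (g a b)]
    · have hfa1 : f a < 1 := by linarith [fnn b]
      have hfb1 : f b < 1 := by linarith [fnn a]
      obtain ⟨n, hn⟩ := exists_pow_lt_of_lt_one (show (0:ℝ) < ε/2 by linarith) hhalf
      rw [hpoweq] at hn
      have hpow : (0:ℝ) < 2^n := by positivity
      have hεn : 2 < ε * 2^n := by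
        rw [div_lt_iff₀ hpow] at hn
        nlinarith
      set k1 : ℕ := Nat.floor (f a * 2^n) + 1 with hk1def
      set k2 : ℕ := Nat.floor (f b * 2^n) + 1 with hk2def
      have hfa2 : f a * 2^n < (k1:ℝ) := by
        rw [hk1def]; push_cast; exact Nat.lt_floor_add_one _
      have hfb2 : f b * 2^n < (k2:ℝ) := by
        rw [hk2def]; push_cast; exact Nat.lt_floor_add_one _
      have hk1le : (k1:ℝ) ≤ f a * 2^n + 1 := by
        rw [hk1def]; push_cast
        have := Nat.floor_le (mul_nonneg (fnn a) hpow.le)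
        linarith
      have hk2le : (k2:ℝ) ≤ f b * 2^n + 1 := by
        rw [hk2def]; push_cast
        have := Nat.floor_le (mul_nonneg (fnn b) hpow.le)
        linarith
      have hk1b : k1 ≤ 2^n := by
        have hfl : Nat.floor (f a * 2^n) < 2^n := by
          rw [Nat.floor_lt (mul_nonneg (fnn a) hpow.le)]
          push_cast
          nlinarith
        omega
      have hk2b : k2 ≤ 2^n := by
        have hfl : Nat.floor (f b * 2^n) < 2^n := by
          rw [Nat.floor_lt (mul_nonneg (fnn b) hpow.le)]
          push_cast
          nlinarith
        omega
      have haW := H1 a n k1 (Nat.le_add_left 1 _) hk1b (by rw [lt_div_iff₀ hpow]; exact hfa2)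
      have hbW := H1 b n k2 (Nat.le_add_left 1 _) hk2b (by rw [lt_div_iff₀ hpow]; exact hfb2)
      have hfin : ((k1:ℝ) + (k2:ℝ))/2^n ≤ f a + f b + ε := by
        rw [div_le_iff₀ hpow]
        nlinarith
      rcases le_or_gt (k1 + k2) (2^n) with hs | hs
      · have hsum2 : k1 * 2^n + k2 * 2^n ≤ 2^(n+n) := by
          rw [← Nat.add_mul, pow_add]
          exact Nat.mul_le_mul_right _ hs
        have hgle : g a b ≤ W (n+n) (k1 * 2^n + k2 * 2^n) := by
          calc g a b ≤ g (W n k1) (W n k2) := Hmono _ _ _ _ ha hb haW hbW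
            _ ≤ W (n+n) (k1 * 2^n + k2 * 2^n) :=
              L2 n n k1 k2 (Nat.le_add_left 1 _) hk1b (Nat.le_add_left 1 _) hk2b hsum2
        have hsum1 : 1 ≤ k1 * 2^n + k2 * 2^n := by
          refine le_trans (hple n k1 (Nat.le_add_left 1 _)) ?_
          rw [Nat.mul_comm]
          exact Nat.le_add_right _ _
        have hH2 := H2 (g a b) (n+n) (k1*2^n + k2*2^n) hsum1 hsum2 hgle
        have heq : ((k1*2^n + k2*2^n : ℕ):ℝ)/2^(n+n) = ((k1:ℝ)+(k2:ℝ))/2^n := by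
          push_cast
          rw [pow_add]
          field_simp
        rw [heq] at hH2
        linarith
      · have h2le : (1:ℝ) ≤ ((k1:ℝ)+(k2:ℝ))/2^n := by
          rw [le_div_iff₀ hpow, one_mul]
          exact_mod_cast hs.le
        linarith [fle1 (g a b)]
  have fright : ∀ t0 ε, 0 < ε → ∃ δ > 0, ∀ t, t ≤ t0 + δ → f t ≤ f t0 + ε := by
    intro t0 ε hε
    rcases le_or_gt 1 (f t0 + ε) with h1 | h1
    · exact ⟨1, one_pos, fun t _ => le_trans (fle1 t) h1⟩
    · obtain ⟨n, hn⟩ := exists_pow_lt_of_lt_one (show (0:ℝ) < ε/4 by linarith) hhalf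
      rw [hpoweq] at hn
      have hpow : (0:ℝ) < 2^n := by positivity
      have hεn : 4 < ε * 2^n := by
        rw [div_lt_iff₀ hpow] at hn
        nlinarith
      set k1 : ℕ := Nat.floor (f t0 * 2^n) + 1 with hk1def
      have hfa2 : f t0 * 2^n < (k1:ℝ) := by
        rw [hk1def]; push_cast; exact Nat.lt_floor_add_one _
      have hk1le : (k1:ℝ) ≤ f t0 * 2^n + 1 := by
        rw [hk1def]; push_cast
        have := Nat.floor_le (mul_nonneg (fnn t0) hpow.le)
        linarith
      have hk2b : k1 + 1 ≤ 2^n := by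
        have : ((k1:ℝ)+1) ≤ (2:ℝ)^n := by nlinarith
        exact_mod_cast this
      have ht0W := H1 t0 n k1 (Nat.le_add_left 1 _) (Nat.le_of_succ_le hk2b) (by rw [lt_div_iff₀ hpow]; exact hfa2)
      have hWlt : W n k1 < W n (k1+1) := G2 n k1 (k1+1) (Nat.le_add_left 1 _) (Nat.lt_succ_self _) hk2b
      refine ⟨W n (k1+1) - t0, by linarith, fun t ht => ?_⟩
      have hH2 := H2 t n (k1+1) (Nat.le_add_left 1 _) hk2b (by push_cast at ht ⊢; linarith)
      have : ((k1:ℝ)+1)/2^n ≤ f t0 + ε := by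
        rw [div_le_iff₀ hpow]
        nlinarith
      have hH2' : f t ≤ ((k1:ℝ)+1)/2^n := by exact_mod_cast hH2
      linarith
  have fleft : ∀ t0 ε, 0 < ε → ∃ δ > 0, ∀ t, t0 - δ ≤ t → f t0 - ε ≤ f t := by
    intro t0 ε hε
    rcases le_or_gt (f t0) ε with h1 | h1
    · exact ⟨1, one_pos, fun t _ => by linarith [fnn t]⟩
    · obtain ⟨n, hn⟩ := exists_pow_lt_of_lt_one hε hhalf
      rw [hpoweq] at hn
      have hpow : (0:ℝ) < 2^n := by positivity
      have hεn : 1 < ε * 2^n := by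
        rw [div_lt_iff₀ hpow] at hn
        nlinarith
      have hx : 1 < f t0 * 2^n := by nlinarith
      set K : ℕ := Nat.ceil (f t0 * 2^n) with hK
      have hK2 : 2 ≤ K := by
        have : 1 < K := by
          rw [hK]
          exact Nat.lt_ceil.mpr (by exact_mod_cast hx)
        omega
      set k : ℕ := K - 1 with hk
      have hkcast : (k:ℝ) = (K:ℝ) - 1 := by
        rw [hk]; push_cast [Nat.cast_sub (by omega : 1 ≤ K)]; ring
      have hklt : (k:ℝ) < f t0 * 2^n := by
        have := Nat.ceil_lt_add_one (mul_nonneg (fnn t0) hpow.le)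
        rw [hkcast]
        rw [hK]
        linarith [this]
      have hkge : f t0 * 2^n - 1 ≤ (k:ℝ) := by
        have := Nat.le_ceil (f t0 * 2^n)
        rw [hkcast, hK]
        linarith [this]
      have hkb : k ≤ 2^n := by
        have h2 : (k:ℝ) < (2:ℝ)^n := by nlinarith [fle1 t0]
        have : (k:ℝ) ≤ (2:ℝ)^n := h2.le
        exact_mod_cast this
      have hk1 : 1 ≤ k := by
        have : (0:ℝ) < (k:ℝ) := by nlinarith
        exact_mod_cast this
      have hWlt : W n k < t0 := by
        by_contra hcon
        push_neg at hcon
        have hH2 := H2 t0 n k hk1 hkb hcon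
        rw [le_div_iff₀ hpow] at hH2
        linarith
      refine ⟨(t0 - W n k)/2, by linarith, fun t ht => ?_⟩
      have htgt : W n k < t := by linarith
      have hH3 := H3 t n k hk1 hkb htgt
      have : f t0 - ε ≤ (k:ℝ)/2^n := by
        rw [le_div_iff₀ hpow]
        nlinarith
      linarith
  have fcont : Continuous f := by
    rw [continuous_iff_continuousAt]
    intro t0
    rw [Metric.continuousAt_iff]
    intro ε hε
    obtain ⟨dR, hdR, hR⟩ := fright t0 (ε/2) (by linarith)
    obtain ⟨dL, hdL, hL⟩ := fleft t0 (ε/2) (by linarith)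
    refine ⟨min dR dL, lt_min hdR hdL, ?_⟩
    intro t ht
    rw [Real.dist_eq] at ht
    rw [Real.dist_eq]
    have habs := abs_lt.mp ht
    have h1 : t ≤ t0 + dR := by
      linarith [habs.2, min_le_left dR dL]
    have h2 : t0 - dL ≤ t := by
      linarith [habs.1, min_le_right dR dL]
    have hh1 := hR t h1
    have hh2 := hL t h2
    rw [abs_lt]
    constructor <;> linarith
  exact ⟨f, fcont, fmono, f0, fnn, fpos, fsub⟩

/-- For a bounded, locally continuous pre-metric `h` there is a correction
function `f` for its triangle deficiency such that `f ∘ h` is a metric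
uniformly equivalent to `h`. -/
theorem locallyContinuous_correction_metric
    {G : Type*} (h : G → G → ℝ)
    (hpm : IsPreMetric h) (hbd : IsBoundedPreMetric h)
    (hlc : IsLocallyContinuous h) :
    ∃ f : ℝ → ℝ, IsCorrectionFunction f (triangleDeficiency h) ∧
      IsMetricFn (fun x y : G => f (h x y)) ∧
      UnifEquiv (fun x y : G => f (h x y)) h := by
  obtain ⟨hnn, heq0, hsymm⟩ := hpm
  obtain ⟨C0, hC0⟩ := hbd
  set C : ℝ := max C0 1 with hC
  have hCpos : 0 < C := lt_of_lt_of_le one_pos (le_max_right _ _)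
  have hCb : ∀ x y, h x y ≤ C := fun x y => le_trans (hC0 x y) (le_max_left _ _)
  set g : ℝ → ℝ → ℝ := triangleDeficiency h with hg
  have hgdef : ∀ a b : ℝ, g a b
      = sSup {r : ℝ | ∃ x y z : G, h x y ≤ a ∧ h y z ≤ b ∧ r = h x z} :=
    fun a b => rfl
  have hSnn : ∀ a b r, r ∈ {r : ℝ | ∃ x y z : G, h x y ≤ a ∧ h y z ≤ b ∧ r = h x z} → 0 ≤ r := by
    rintro a b r ⟨x, y, z, _, _, rfl⟩
    exact hnn x z
  have hSbd : ∀ a b : ℝ, BddAbove {r : ℝ | ∃ x y z : G, h x y ≤ a ∧ h y z ≤ b ∧ r = h x z} := by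
    intro a b
    refine ⟨C, ?_⟩
    rintro r ⟨x, y, z, _, _, rfl⟩
    exact hCb x z
  have gnn : ∀ a b : ℝ, 0 ≤ g a b := fun a b => Real.sSup_nonneg (hSnn a b)
  have gmono : ∀ a a' b b' : ℝ, a ≤ a' → b ≤ b' → g a b ≤ g a' b' := by
    intro a a' b b' haa hbb
    refine Real.sSup_le ?_ (gnn a' b')
    rintro r ⟨x, y, z, h1, h2, rfl⟩
    exact le_csSup (hSbd a' b') ⟨x, y, z, le_trans h1 haa, le_trans h2 hbb, rfl⟩
  have gsym : ∀ a b : ℝ, g a b = g b a := by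
    intro a b
    have hset : {r : ℝ | ∃ x y z : G, h x y ≤ a ∧ h y z ≤ b ∧ r = h x z}
        = {r : ℝ | ∃ x y z : G, h x y ≤ b ∧ h y z ≤ a ∧ r = h x z} := by
      ext r
      constructor
      · rintro ⟨x, y, z, h1, h2, rfl⟩
        exact ⟨z, y, x, by rwa [← hsymm y z], by rwa [← hsymm x y], hsymm x z⟩
      · rintro ⟨x, y, z, h1, h2, rfl⟩
        exact ⟨z, y, x, by rwa [← hsymm y z], by rwa [← hsymm x y], hsymm x z⟩
    rw [hgdef, hgdef, hset]
  have gelem : ∀ (x y z : G), h x z ≤ g (h x y) (h y z) := by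
    intro x y z
    exact le_csSup (hSbd (h x y) (h y z)) ⟨x, y, z, le_rfl, le_rfl, rfl⟩
  have gP : ∀ y t : ℝ, 0 ≤ y → y < t → ∃ δ > 0, g δ (y + δ) < t := by
    intro y t hy hyt
    set ε : ℝ := (t - y)/2 with hε
    have hεpos : 0 < ε := by rw [hε]; linarith
    obtain ⟨δ0, hδ0, hδ0p⟩ := hlc ε hεpos
    set δ : ℝ := min (δ0/2) (ε/2) with hδ
    have hδpos : 0 < δ := lt_min (by linarith) (by linarith)
    have hδδ0 : δ < δ0 := lt_of_le_of_lt (min_le_left _ _) (by linarith)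
    have hδε : δ ≤ ε/2 := min_le_right _ _
    refine ⟨δ, hδpos, ?_⟩
    have hb : g δ (y + δ) ≤ y + δ + ε := by
      refine Real.sSup_le ?_ (by linarith)
      rintro r ⟨x, y', z, h1, h2, rfl⟩
      have habs := (abs_lt.mp (hδ0p x y' z (lt_of_le_of_lt h1 hδδ0))).2
      have hzz : h x z < h z y' + ε := by linarith
      rw [← hsymm y' z] at hzz
      linarith
    linarith
  obtain ⟨f, fcont, fmono, f0, fnn, fpos, fsub⟩ := corrAux g C hCpos
    (fun a a' b b' _ _ haa hbb => gmono a a' b b' haa hbb)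
    (fun a b _ _ => gsym a b) gP
  have hd0 : ∀ x y : G, f (h x y) = 0 ↔ x = y := by
    intro x y
    constructor
    · intro hfz
      by_contra hne
      have hhne : h x y ≠ 0 := fun hz => hne ((heq0 x y).mp hz)
      have hhpos : 0 < h x y := lt_of_le_of_ne (hnn x y) (Ne.symm hhne)
      exact absurd hfz (ne_of_gt (fpos _ hhpos))
    · rintro rfl
      rw [(heq0 x x).mpr rfl, f0]
  refine ⟨f, ⟨fcont.continuousOn, fmono.monotoneOn _, f0, fun a _ => fnn a,
      fun a b ha hb => fsub a b ha hb⟩,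
    ⟨⟨fun x y => fnn (h x y), hd0, fun x y => congrArg f (hsymm x y)⟩, ?_⟩, ?_, ?_⟩
  · -- triangle inequality
    intro x y z
    calc f (h x z) ≤ f (g (h x y) (h y z)) := fmono (gelem x y z)
      _ ≤ f (h x y) + f (h y z) := fsub _ _ (hnn x y) (hnn y z)
  · -- f ∘ h small → h small
    intro ε hε
    refine ⟨f ε, fpos ε hε, fun x y hxy => ?_⟩
    by_contra hcon
    push_neg at hcon
    exact absurd hxy (not_lt.mpr (fmono hcon))
  · -- h small → f ∘ h small
    intro ε hε
    have hc0 : ContinuousAt f 0 := fcont.continuousAt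
    rw [Metric.continuousAt_iff] at hc0
    obtain ⟨δ, hδ, hdd⟩ := hc0 ε hε
    refine ⟨δ, hδ, fun x y hxy => ?_⟩
    have hdist : dist (h x y) 0 < δ := by
      rw [Real.dist_eq, sub_zero, abs_of_nonneg (hnn x y)]
      exact hxy
    have := hdd hdist
    rw [Real.dist_eq, f0, sub_zero] at this
    calc f (h x y) ≤ |f (h x y)| := le_abs_self _
      _ < ε := this
end

section
/- Let G be a group and let d be a left-invariant metric on G (d(gx,gy) = d(x,y) for all g, x, y ∈ G). Let (r_n)_{n ≥ 0} be a sequence of reals with 0 < r_{n+1} < r_n and r_n ≤ 2^{-n} for all n ≥ 0, and let (f_n)_{n ≥ 0} be functions f_n : G → [0,1] such that for each n: f_n(x) = f_n(x^{-1}) for all x ∈ G, f_n(x) = 0 whenever d(e,x) < r_{n+1}, and f_n(x) = 1 whenever d(e,x) ≥ r_n. Define h : G × G → [0,∞) by h(x,y) = Σ_{n≥0} 2^{-(n+1)} f_n(x^{-1}y). Then h is a left-invariant pre-metric on G (h(gx,gy) = h(x,y) for all g, x, y ∈ G) that is uniformly equivalent to d. -/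
/-- Given a left-invariant metric `d` on a group `G`, radii `r n` with
`0 < r (n+1) < r n ≤ 2⁻ⁿ`, and symmetric functions `f n : G → [0,1]` vanishing
on the ball of radius `r (n+1)` around the identity and equal to `1` outside
the ball of radius `r n`, the function
`h x y = ∑ₙ 2^{-(n+1)} f n (x⁻¹ y)` is a left-invariant pre-metric uniformly
equivalent to `d`. -/
theorem leftInvariant_preMetric_from_separating_functions
    {G : Type*} [Group G]
    (d : G → G → ℝ) (hd : IsMetricFn d)
    (hdinv : ∀ g x y : G, d (g * x) (g * y) = d x y)
    (r : ℕ → ℝ)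
    (hrpos : ∀ n : ℕ, 0 < r (n + 1))
    (hrdec : ∀ n : ℕ, r (n + 1) < r n)
    (hrle : ∀ n : ℕ, r n ≤ 1 / 2 ^ n)
    (f : ℕ → G → ℝ)
    (hfrange : ∀ n : ℕ, ∀ x : G, f n x ∈ Set.Icc (0 : ℝ) 1)
    (hfsym : ∀ n : ℕ, ∀ x : G, f n x = f n x⁻¹)
    (hf0 : ∀ n : ℕ, ∀ x : G, d 1 x < r (n + 1) → f n x = 0)
    (hf1 : ∀ n : ℕ, ∀ x : G, r n ≤ d 1 x → f n x = 1)
    (h : G → G → ℝ)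
    (hh : h = fun x y => ∑' n : ℕ, f n (x⁻¹ * y) / 2 ^ (n + 1)) :
    IsPreMetric h ∧ (∀ g x y : G, h (g * x) (g * y) = h x y) ∧ UnifEquiv h d := by
  obtain ⟨⟨hdnn, hdeq, hdsym⟩, hdtri⟩ := hd
  subst hh
  have hterm_nonneg : ∀ x : G, ∀ n : ℕ, 0 ≤ f n x / 2 ^ (n + 1) := fun x n =>
    div_nonneg (hfrange n x).1 (by positivity)
  have hterm_le : ∀ x : G, ∀ n : ℕ, f n x / 2 ^ (n + 1) ≤ (1 / 2 : ℝ) ^ (n + 1) := by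
    intro x n
    rw [div_pow, one_pow]
    gcongr
    exact (hfrange n x).2
  have hsumb : Summable (fun n : ℕ => (1 / 2 : ℝ) ^ (n + 1)) := by
    simpa [pow_succ] using summable_geometric_two.mul_right (1 / 2 : ℝ)
  have hsum : ∀ x : G, Summable (fun n : ℕ => f n x / 2 ^ (n + 1)) := fun x =>
    Summable.of_nonneg_of_le (hterm_nonneg x) (hterm_le x) hsumb
  have hd1 : ∀ x y : G, d 1 (x⁻¹ * y) = d x y := by
    intro x y
    simpa using (hdinv x 1 (x⁻¹ * y)).symm
  have hranti : Antitone r := (strictAnti_nat_of_succ_lt hrdec).antitone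
  -- h vanishes on the diagonal
  have hdiag : ∀ x : G, (∑' n : ℕ, f n (x⁻¹ * x) / 2 ^ (n + 1)) = 0 := by
    intro x
    have : ∀ n : ℕ, f n (x⁻¹ * x) / 2 ^ (n + 1) = 0 := by
      intro n
      have h1 : d 1 (x⁻¹ * x) < r (n + 1) := by
        rw [inv_mul_cancel]
        rw [(hdeq 1 1).2 rfl]
        exact hrpos n
      rw [hf0 n _ h1, zero_div]
    simp only [inv_mul_cancel] at this ⊢
    simp [this]
  -- positivity off the diagonal
  have hoff : ∀ x y : G, x ≠ y → 0 < ∑' n : ℕ, f n (x⁻¹ * y) / 2 ^ (n + 1) := by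
    intro x y hxy
    have hdpos : 0 < d x y := by
      rcases lt_or_eq_of_le (hdnn x y) with h' | h'
      · exact h'
      · exact absurd ((hdeq x y).1 h'.symm) hxy
    obtain ⟨n, hn⟩ := exists_pow_lt_of_lt_one hdpos (by norm_num : (1 / 2 : ℝ) < 1)
    have hfn : f n (x⁻¹ * y) = 1 := by
      apply hf1
      rw [hd1]
      calc r n ≤ 1 / 2 ^ n := hrle n
        _ = (1 / 2 : ℝ) ^ n := by rw [div_pow, one_pow]
        _ ≤ d x y := hn.le
    have hle : f n (x⁻¹ * y) / 2 ^ (n + 1) ≤ ∑' m : ℕ, f m (x⁻¹ * y) / 2 ^ (m + 1) :=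
      Summable.le_tsum (hsum _) n (fun m _ => hterm_nonneg _ m)
    calc (0 : ℝ) < f n (x⁻¹ * y) / 2 ^ (n + 1) := by rw [hfn]; positivity
      _ ≤ _ := hle
  refine ⟨⟨?_, ?_, ?_⟩, ?_, ?_, ?_⟩
  · intro x y
    exact tsum_nonneg (hterm_nonneg _)
  · intro x y
    constructor
    · intro h0
      by_contra hxy
      exact absurd h0 (ne_of_gt (hoff x y hxy))
    · rintro rfl
      exact hdiag x
  · intro x y
    refine tsum_congr fun n => ?_
    have : f n (x⁻¹ * y) = f n (y⁻¹ * x) := by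
      rw [hfsym n (x⁻¹ * y), mul_inv_rev, inv_inv]
    rw [this]
  · intro g x y
    simp only [mul_inv_rev]
    refine tsum_congr fun n => ?_
    congr 1
    group
  -- h small implies d small
  · intro ε hε
    obtain ⟨n, hn⟩ := exists_pow_lt_of_lt_one hε (by norm_num : (1 / 2 : ℝ) < 1)
    refine ⟨(1 / 2 : ℝ) ^ (n + 1), by positivity, fun x y hxy => ?_⟩
    by_contra hde
    push_neg at hde
    have hfn : f n (x⁻¹ * y) = 1 := by
      apply hf1
      rw [hd1]
      calc r n ≤ 1 / 2 ^ n := hrle n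
        _ = (1 / 2 : ℝ) ^ n := by rw [div_pow, one_pow]
        _ ≤ d x y := le_of_lt (lt_of_lt_of_le hn hde)
    have hle : f n (x⁻¹ * y) / 2 ^ (n + 1) ≤ ∑' m : ℕ, f m (x⁻¹ * y) / 2 ^ (m + 1) :=
      Summable.le_tsum (hsum _) n (fun m _ => hterm_nonneg _ m)
    rw [hfn] at hle
    have : (1 / 2 : ℝ) ^ (n + 1) ≤ ∑' m : ℕ, f m (x⁻¹ * y) / 2 ^ (m + 1) := by
      calc (1 / 2 : ℝ) ^ (n + 1) = 1 / 2 ^ (n + 1) := by rw [div_pow, one_pow]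
        _ ≤ _ := hle
    exact absurd hxy (not_lt.2 this)
  -- d small implies h small
  · intro ε hε
    obtain ⟨N, hN⟩ := exists_pow_lt_of_lt_one hε (by norm_num : (1 / 2 : ℝ) < 1)
    refine ⟨r (N + 1), hrpos N, fun x y hxy => ?_⟩
    have hvanish : ∀ n : ℕ, n < N + 1 → f n (x⁻¹ * y) / 2 ^ (n + 1) = 0 := by
      intro n hn
      have : d 1 (x⁻¹ * y) < r (n + 1) := by
        rw [hd1]
        exact lt_of_lt_of_le hxy (hranti (Nat.succ_le_succ (Nat.lt_succ_iff.1 hn)))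
      rw [hf0 n _ this, zero_div]
    have hsplit := Summable.sum_add_tsum_nat_add (f := fun n : ℕ => f n (x⁻¹ * y) / 2 ^ (n + 1)) (N + 1) (hsum (x⁻¹ * y))
    have hfin : (∑ i ∈ Finset.range (N + 1), f i (x⁻¹ * y) / 2 ^ (i + 1)) = 0 :=
      Finset.sum_eq_zero fun i hi => hvanish i (Finset.mem_range.1 hi)
    have htail : (∑' n : ℕ, f (n + (N + 1)) (x⁻¹ * y) / 2 ^ (n + (N + 1) + 1))
        ≤ ∑' n : ℕ, (1 / 2 : ℝ) ^ (n + (N + 1) + 1) := by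
      have s1 : Summable (fun n : ℕ => f (n + (N + 1)) (x⁻¹ * y) / 2 ^ (n + (N + 1) + 1)) :=
        (summable_nat_add_iff (f := fun n : ℕ => f n (x⁻¹ * y) / 2 ^ (n + 1)) (N + 1)).2
          (hsum (x⁻¹ * y))
      have s2 : Summable (fun n : ℕ => (1 / 2 : ℝ) ^ (n + (N + 1) + 1)) :=
        (summable_nat_add_iff (f := fun n : ℕ => (1 / 2 : ℝ) ^ (n + 1)) (N + 1)).2 hsumb
      exact Summable.tsum_le_tsum (fun n => hterm_le _ _) s1 s2
    have hgeo : (∑' n : ℕ, (1 / 2 : ℝ) ^ (n + (N + 1) + 1)) = (1 / 2 : ℝ) ^ (N + 1) := by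
      have : ∀ n : ℕ, (1 / 2 : ℝ) ^ (n + (N + 1) + 1) = (1 / 2 : ℝ) ^ n * (1 / 2) ^ (N + 2) := by
        intro n
        rw [← pow_add]
        ring_nf
      rw [tsum_congr this, tsum_mul_right, tsum_geometric_two]
      ring
    calc (∑' n : ℕ, f n (x⁻¹ * y) / 2 ^ (n + 1))
        = (∑ i ∈ Finset.range (N + 1), f i (x⁻¹ * y) / 2 ^ (i + 1))
          + ∑' n : ℕ, f (n + (N + 1)) (x⁻¹ * y) / 2 ^ (n + (N + 1) + 1) := hsplit.symm
      _ = ∑' n : ℕ, f (n + (N + 1)) (x⁻¹ * y) / 2 ^ (n + (N + 1) + 1) := by rw [hfin, zero_add]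
      _ ≤ (1 / 2 : ℝ) ^ (N + 1) := htail.trans_eq hgeo
      _ ≤ (1 / 2 : ℝ) ^ N := by
          apply pow_le_pow_of_le_one <;> norm_num
      _ < ε := hN
end
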